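/- Let T be the rooted symmetric tree with daughter degree sequence (k_1, k_2), let f be the graceful labelling of Theorem 1 (which assigns 0 to the root), and let h_2 = 1 + k_2. Then applying the permutation of labels that swaps j·h_2 with j·h_2 + k_2 for each j = 0, 1, ..., k_1 - 1 (fixing all other labels) to the vertex labels of f yields another graceful labelling of T, which assigns label 0 to a vertex at level 3. -/

import Mathlib

/-- A graceful labelling of a graph `G` on a finite vertex type: `f` is an injection into
`{0, ..., |V| - 1}` and the induced edge labels `|f u - f v|` are pairwise distinct. -/
def IsGraceful {V : Type*} [Fintype V] (G : SimpleGraph V) (f : V → ℕ) : Prop :=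
  Function.Injective f ∧ (∀ v, f v < Fintype.card V) ∧
    ∀ u v u' v', G.Adj u v → G.Adj u' v' →
      ((f u : ℤ) - (f v : ℤ)).natAbs = ((f u' : ℤ) - (f v' : ℤ)).natAbs →
      s(u, v) = s(u', v')


open scoped Classical

/-- The rooted symmetric tree with daughter degree sequence `(k₁, k₂)`: `none` is the
root, `some (i, none)` are the `k₁` level-2 vertices, and `some (i, some j)` are the
level-3 leaves under the level-2 vertex `i`. -/
def rst3 (k₁ k₂ : ℕ) : SimpleGraph (Option (Fin k₁ × Option (Fin k₂))) :=
  SimpleGraph.fromRel (fun u v =>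
    (u = none ∧ ∃ i, v = some (i, none)) ∨
    (∃ i j, u = some (i, none) ∧ v = some (i, some j)))

/-- The labelling of Theorem 1 for the `(k₁, k₂)` rooted symmetric tree (with
`h₂ = 1 + k₂`): root ↦ `0`, level-2 vertex `x₁` ↦ `(k₁ - x₁) * h₂`, level-3 vertex
`(x₁, x₂)` ↦ `x₁ * h₂ + x₂ + 1`. -/
def rstLabel (k₁ k₂ : ℕ) : Option (Fin k₁ × Option (Fin k₂)) → ℕ
  | none => 0
  | some (i, none) => (k₁ - (i : ℕ)) * (1 + k₂)
  | some (i, some j) => (i : ℕ) * (1 + k₂) + (j : ℕ) + 1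

/-- The permutation of labels which, for each `j = 0, 1, ..., k₁ - 1`, swaps the label
`j * h₂` with `j * h₂ + k₂` (where `h₂ = 1 + k₂`) and fixes all other labels. -/
noncomputable def swapPerm (k₁ k₂ : ℕ) (m : ℕ) : ℕ :=
  if ∃ j < k₁, m = j * (1 + k₂) then m + k₂
  else if ∃ j < k₁, m = j * (1 + k₂) + k₂ then m - k₂
  else m


/-!
Write `h₂ = 1 + k₂` and `σ = swapPerm k₁ k₂`. Since `σ` is an involution preserving
`{0, ..., k₁ h₂}`, the labelling `σ ∘ f` is injective with values in range. Its edge labels are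
those of `f`, permuted: indexing edges by their lower endpoint, the new label of edge `e` is the
old label of edge `φ e`, where the involution `φ` swaps the edge from the root to level-2 vertex
`0` with the edge from `0` to its last leaf, fixes the other edges below `0` and the other edges
at the root, and sends the edges below level-2 vertex `i ≠ 0` to those below `k₁ - i`,
reversing the order of all leaves but the last. So edge labels stay distinct. Finally `f` gives
the leaf `(0, k₂ - 1)` the label `k₂`, which `σ` sends to `0`.
-/

open Function

section EdgeLabel

variable {V E : Type*}

def edgeLabel (f : V → ℕ) (u v : V) : ℕ := ((f u : ℤ) - f v).natAbs

theorem edgeLabel_congr (f : V → ℕ) {u v u' v' : V} (h : s(u, v) = s(u', v')) :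
    edgeLabel f u v = edgeLabel f u' v' := by
  rcases Sym2.eq_iff.mp h with ⟨rfl, rfl⟩ | ⟨rfl, rfl⟩
  · rfl
  · rw [edgeLabel, edgeLabel, ← Int.natAbs_neg, neg_sub]

variable [Fintype V] {G : SimpleGraph V} {p c : E → V}

theorem IsGraceful.injective_edgeLabel {f : V → ℕ} (hf : IsGraceful G f)
    (hadj : ∀ e, G.Adj (p e) (c e)) (hpc : Injective fun e => s(p e, c e)) :
    Injective fun e => edgeLabel f (p e) (c e) :=
  fun e e' h => hpc (hf.2.2 _ _ _ _ (hadj e) (hadj e') h)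

theorem isGraceful_of_injective_edgeLabel {g : V → ℕ} (hg : Injective g)
    (hg_lt : ∀ v, g v < Fintype.card V)
    (hcover : ∀ {u v}, G.Adj u v → ∃ e, s(u, v) = s(p e, c e))
    (hlabel : Injective fun e => edgeLabel g (p e) (c e)) : IsGraceful G g := by
  refine ⟨hg, hg_lt, fun u v u' v' huv hu'v' h => ?_⟩
  obtain ⟨e, he⟩ := hcover huv
  obtain ⟨e', he'⟩ := hcover hu'v'
  have : edgeLabel g (p e) (c e) = edgeLabel g (p e') (c e') := by
    rw [← edgeLabel_congr g he, ← edgeLabel_congr g he']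
    exact h
  rw [he, he', hlabel this]

end EdgeLabel

section Tree

variable {k₁ k₂ : ℕ}

def rst3Parent : Fin k₁ × Option (Fin k₂) → Option (Fin k₁ × Option (Fin k₂))
  | (_, none) => none
  | (i, some _) => some (i, none)

theorem rst3_adj_parent (e : Fin k₁ × Option (Fin k₂)) :
    (rst3 k₁ k₂).Adj (rst3Parent e) (some e) := by
  rcases e with ⟨i, _ | j⟩ <;> simp [rst3, rst3Parent, SimpleGraph.fromRel_adj]

theorem rst3_exists_parent_of_adj {u v : Option (Fin k₁ × Option (Fin k₂))}
    (h : (rst3 k₁ k₂).Adj u v) : ∃ e, s(u, v) = s(rst3Parent e, some e) := by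
  obtain ⟨-, h | h⟩ := (SimpleGraph.fromRel_adj _ _ _).mp h <;>
    rcases h with ⟨rfl, i, rfl⟩ | ⟨i, j, rfl, rfl⟩
  · exact ⟨(i, none), rfl⟩
  · exact ⟨(i, some j), rfl⟩
  · exact ⟨(i, none), Sym2.eq_swap⟩
  · exact ⟨(i, some j), Sym2.eq_swap⟩

theorem rst3_parentEdge_injective :
    Injective fun e : Fin k₁ × Option (Fin k₂) => s(rst3Parent e, some e) := by
  intro e e' h
  rcases Sym2.eq_iff.mp h with ⟨-, h⟩ | ⟨h, h'⟩
  · exact Option.some_injective _ h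
  · rcases e with ⟨i, _ | j⟩ <;> rcases e' with ⟨i', _ | j'⟩ <;>
      simp [rst3Parent] at h h'

theorem card_rst3_vertex :
    Fintype.card (Option (Fin k₁ × Option (Fin k₂))) = k₁ * (1 + k₂) + 1 := by
  simp only [Fintype.card_option, Fintype.card_prod, Fintype.card_fin]
  ring

end Tree

section SwapPerm

variable {k₁ k₂ : ℕ}

theorem eq_of_mul_add_eq_mul_add {n a b r s : ℕ} (hr : r < n) (hs : s < n)
    (h : a * n + r = b * n + s) : a = b ∧ r = s := by
  have hdm : ∀ q t, t < n → (q * n + t) / n = q ∧ (q * n + t) % n = t :=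
    fun q t ht => (Nat.div_mod_unique (by omega)).mpr ⟨by ring, ht⟩
  obtain ⟨ha, hr'⟩ := hdm a r hr
  obtain ⟨hb, hs'⟩ := hdm b s hs
  rw [h] at ha hr'
  exact ⟨ha.symm.trans hb, hr'.symm.trans hs'⟩

theorem swapPerm_mul {j : ℕ} (hj : j < k₁) :
    swapPerm k₁ k₂ (j * (1 + k₂)) = j * (1 + k₂) + k₂ := by
  rw [swapPerm, if_pos ⟨j, hj, rfl⟩]

theorem swapPerm_mul_add_self (hk₂ : 1 ≤ k₂) {j : ℕ} (hj : j < k₁) :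
    swapPerm k₁ k₂ (j * (1 + k₂) + k₂) = j * (1 + k₂) := by
  have hne : ¬ ∃ j' < k₁, j * (1 + k₂) + k₂ = j' * (1 + k₂) := by
    rintro ⟨j', -, h⟩
    have := eq_of_mul_add_eq_mul_add (n := 1 + k₂) (s := 0) (by omega) (by omega) h
    omega
  rw [swapPerm, if_neg hne, if_pos ⟨j, hj, rfl⟩, Nat.add_sub_cancel]

theorem swapPerm_of_not_exists {m : ℕ} (h₀ : ¬ ∃ j < k₁, m = j * (1 + k₂))
    (h₁ : ¬ ∃ j < k₁, m = j * (1 + k₂) + k₂) : swapPerm k₁ k₂ m = m := by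
  rw [swapPerm, if_neg h₀, if_neg h₁]

theorem swapPerm_mul_add {q r : ℕ} (hr₀ : 0 < r) (hr : r < k₂) :
    swapPerm k₁ k₂ (q * (1 + k₂) + r) = q * (1 + k₂) + r := by
  refine swapPerm_of_not_exists ?_ ?_ <;> rintro ⟨j, hj, h⟩
  · have := eq_of_mul_add_eq_mul_add (s := 0) (by omega) (by omega) h
    omega
  · have := eq_of_mul_add_eq_mul_add (by omega) (by omega) h
    omega

theorem swapPerm_mul_of_le {q : ℕ} (hq : k₁ ≤ q) :
    swapPerm k₁ k₂ (q * (1 + k₂)) = q * (1 + k₂) := by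
  refine swapPerm_of_not_exists ?_ ?_ <;> rintro ⟨j, hj, h⟩
  · have := eq_of_mul_add_eq_mul_add (r := 0) (s := 0) (by omega) (by omega) h
    omega
  · have := eq_of_mul_add_eq_mul_add (r := 0) (by omega) (by omega) h
    omega

theorem swapPerm_involutive (hk₂ : 1 ≤ k₂) : Involutive (swapPerm k₁ k₂) := by
  intro m
  by_cases h₀ : ∃ j < k₁, m = j * (1 + k₂)
  · obtain ⟨j, hj, rfl⟩ := h₀
    rw [swapPerm_mul hj, swapPerm_mul_add_self hk₂ hj]
  by_cases h₁ : ∃ j < k₁, m = j * (1 + k₂) + k₂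
  · obtain ⟨j, hj, rfl⟩ := h₁
    rw [swapPerm_mul_add_self hk₂ hj, swapPerm_mul hj]
  rw [swapPerm_of_not_exists h₀ h₁, swapPerm_of_not_exists h₀ h₁]

theorem swapPerm_lt {m : ℕ} (hm : m < k₁ * (1 + k₂) + 1) :
    swapPerm k₁ k₂ m < k₁ * (1 + k₂) + 1 := by
  unfold swapPerm
  split_ifs with h₀
  · obtain ⟨j, hj, rfl⟩ := h₀
    have := Nat.mul_le_mul_right (1 + k₂) hj
    rw [Nat.succ_mul] at this
    omega
  all_goals omega

end SwapPerm

section SwappedLabel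

variable {k₁ k₂ : ℕ}

theorem swapPerm_rstLabel_root (hk₁ : 1 ≤ k₁) : swapPerm k₁ k₂ (rstLabel k₁ k₂ none) = k₂ := by
  simpa [rstLabel] using swapPerm_mul (k₂ := k₂) (j := 0) hk₁

theorem swapPerm_rstLabel_zero (i : Fin k₁) (hi : (i : ℕ) = 0) :
    swapPerm k₁ k₂ (rstLabel k₁ k₂ (some (i, none))) = k₁ * (1 + k₂) := by
  rw [rstLabel, hi, Nat.sub_zero, swapPerm_mul_of_le le_rfl]

theorem swapPerm_rstLabel_of_ne_zero (i : Fin k₁) (hi : (i : ℕ) ≠ 0) :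
    swapPerm k₁ k₂ (rstLabel k₁ k₂ (some (i, none))) = (k₁ - i) * (1 + k₂) + k₂ :=
  swapPerm_mul (by omega)

theorem swapPerm_rstLabel_last (hk₂ : 1 ≤ k₂) (i : Fin k₁) (j : Fin k₂) (hj : (j : ℕ) + 1 = k₂) :
    swapPerm k₁ k₂ (rstLabel k₁ k₂ (some (i, some j))) = i * (1 + k₂) := by
  rw [rstLabel, add_assoc, hj, swapPerm_mul_add_self hk₂ i.isLt]

theorem swapPerm_rstLabel_of_ne_last (i : Fin k₁) (j : Fin k₂) (hj : (j : ℕ) + 1 ≠ k₂) :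
    swapPerm k₁ k₂ (rstLabel k₁ k₂ (some (i, some j))) = i * (1 + k₂) + j + 1 := by
  rw [rstLabel, add_assoc, swapPerm_mul_add (Nat.succ_pos _) (by omega)]

end SwappedLabel

section EdgePerm

variable {k₁ k₂ : ℕ}

def rst3EdgePerm (hk₂ : 1 ≤ k₂) : Fin k₁ × Option (Fin k₂) → Fin k₁ × Option (Fin k₂)
  | (i, none) => if (i : ℕ) = 0 then (i, some ⟨k₂ - 1, by omega⟩) else (i, none)
  | (i, some j) =>
    if hi : (i : ℕ) = 0 then (if (j : ℕ) + 1 = k₂ then (i, none) else (i, some j))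
    else (⟨k₁ - i, by have := i.isLt; omega⟩,
      some (if (j : ℕ) + 1 = k₂ then j else ⟨k₂ - 2 - j, by omega⟩))

theorem rst3EdgePerm_involutive (hk₂ : 1 ≤ k₂) : Involutive (rst3EdgePerm (k₁ := k₁) hk₂) := by
  rintro ⟨i, _ | j⟩ <;> have hi₁ := i.isLt <;> by_cases hi : (i : ℕ) = 0
  · simp only [rst3EdgePerm, hi, ↓reduceIte, ↓reduceDIte, ite_eq_left_iff, Prod.mk.injEq,
      reduceCtorEq, and_false, imp_false, Decidable.not_not]
    omega
  · simp only [rst3EdgePerm, hi, ↓reduceIte]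
  all_goals by_cases hj : (j : ℕ) + 1 = k₂
  · simp only [rst3EdgePerm, hi, hj, ↓reduceIte, ↓reduceDIte, Prod.mk.injEq, Option.some.injEq,
      Fin.ext_iff, true_and]
    omega
  · simp only [rst3EdgePerm, hi, hj, ↓reduceIte, ↓reduceDIte]
  · have hi' : k₁ - i ≠ 0 := by omega
    simp only [rst3EdgePerm, hi, hi', hj, ↓reduceIte, ↓reduceDIte, Prod.mk.injEq, Fin.ext_iff,
      and_true]
    omega
  · have hi' : k₁ - i ≠ 0 := by omega
    have hj' : k₂ - 2 - j + 1 ≠ k₂ := by omega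
    simp only [rst3EdgePerm, hi, hi', hj, hj', ↓reduceIte, ↓reduceDIte, Prod.mk.injEq,
      Fin.ext_iff, Option.some.injEq]
    omega

theorem edgeLabel_swapPerm_rstLabel (hk₁ : 1 ≤ k₁) (hk₂ : 1 ≤ k₂)
    (e : Fin k₁ × Option (Fin k₂)) :
    edgeLabel (swapPerm k₁ k₂ ∘ rstLabel k₁ k₂) (rst3Parent e) (some e) =
      edgeLabel (rstLabel k₁ k₂) (rst3Parent (rst3EdgePerm hk₂ e)) (some (rst3EdgePerm hk₂ e)) := by
  obtain ⟨i, _ | j⟩ := e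
  all_goals
    have hi₁ : (i : ℕ) * (1 + k₂) + (1 + k₂) ≤ k₁ * (1 + k₂) := by
      simpa [Nat.succ_mul] using Nat.mul_le_mul_right (1 + k₂) i.isLt
    have hi₂ : k₁ - (k₁ - i) = i := Nat.sub_sub_self i.isLt.le
    have hi₃ := Nat.sub_mul k₁ i (1 + k₂)
    by_cases hi : (i : ℕ) = 0
  · simp only [edgeLabel, comp_apply, rst3Parent, swapPerm_rstLabel_root hk₁,
      swapPerm_rstLabel_zero i hi]
    simp only [rst3EdgePerm, rstLabel, hi, ↓reduceIte, Nat.sub_zero]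
    omega
  · simp only [edgeLabel, comp_apply, rst3Parent, swapPerm_rstLabel_root hk₁,
      swapPerm_rstLabel_of_ne_zero i hi]
    simp only [rst3EdgePerm, rstLabel, hi, ↓reduceIte]
    omega
  all_goals by_cases hj : (j : ℕ) + 1 = k₂
  · simp only [edgeLabel, comp_apply, rst3Parent, swapPerm_rstLabel_zero i hi,
      swapPerm_rstLabel_last hk₂ i j hj]
    simp only [rst3EdgePerm, rstLabel, hi, hj, ↓reduceIte, ↓reduceDIte, Nat.sub_zero, zero_mul]
    omega
  · simp only [edgeLabel, comp_apply, rst3Parent, swapPerm_rstLabel_zero i hi,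
      swapPerm_rstLabel_of_ne_last i j hj]
    simp only [rst3EdgePerm, rstLabel, hi, hj, ↓reduceIte, ↓reduceDIte, Nat.sub_zero]
  · simp only [edgeLabel, comp_apply, rst3Parent, swapPerm_rstLabel_of_ne_zero i hi,
      swapPerm_rstLabel_last hk₂ i j hj]
    simp only [rst3EdgePerm, rstLabel, hi, hj, hi₂, ↓reduceIte, ↓reduceDIte]
    push_cast [hi₃]
    omega
  · simp only [edgeLabel, comp_apply, rst3Parent, swapPerm_rstLabel_of_ne_zero i hi,
      swapPerm_rstLabel_of_ne_last i j hj]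
    simp only [rst3EdgePerm, rstLabel, hi, hj, hi₂, ↓reduceIte, ↓reduceDIte]
    push_cast [hi₃]
    omega

end EdgePerm

/-- Lemma 1: applying the product of transpositions
`(0 k₂)(h₂ h₂+k₂)⋯((k₁-1)h₂ (k₁-1)h₂+k₂)` to the vertex labels of the graceful
labelling `f` of Theorem 1 (which assigns `0` to the root) yields another graceful
labelling of the `(k₁, k₂)` rooted symmetric tree, one that assigns label `0` to a
vertex at level 3. -/
theorem rst3_swapPerm_graceful (k₁ k₂ : ℕ) (hk₁ : 1 ≤ k₁) (hk₂ : 1 ≤ k₂)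
    (hf : IsGraceful (rst3 k₁ k₂) (rstLabel k₁ k₂)) :
    IsGraceful (rst3 k₁ k₂) (fun v => swapPerm k₁ k₂ (rstLabel k₁ k₂ v)) ∧
    ∃ (i : Fin k₁) (j : Fin k₂), swapPerm k₁ k₂ (rstLabel k₁ k₂ (some (i, some j))) = 0 := by
  refine ⟨isGraceful_of_injective_edgeLabel ((swapPerm_involutive hk₂).injective.comp hf.1)
    (fun v => ?_) rst3_exists_parent_of_adj ?_, ⟨0, hk₁⟩, ⟨k₂ - 1, by omega⟩, ?_⟩
  · rw [card_rst3_vertex]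
    exact swapPerm_lt (card_rst3_vertex ▸ hf.2.1 v)
  · have := (hf.injective_edgeLabel rst3_adj_parent rst3_parentEdge_injective).comp
      (rst3EdgePerm_involutive hk₂).injective
    simpa only [comp_def, ← edgeLabel_swapPerm_rstLabel hk₁ hk₂] using this
  · exact (swapPerm_rstLabel_last hk₂ _ _ (Nat.sub_add_cancel hk₂)).trans (zero_mul _)
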